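/- arXiv:1604.00638 — 5 statements merged into one kernel-verified Lean document; each statement's English description precedes it below -/
import Mathlib

section
/- Let X be a compact metric space and equip C(X) with the σ-algebra generated by the point-evaluation maps f ↦ f(x). Then for every compact K ⊆ X, the set {f ∈ C(X) : ∃ x ∈ K, f(x) = 0} is measurable; consequently, the zero-set map Z : C(X) → F(X), f ↦ f⁻¹({0}), is measurable with respect to the σ-algebra on F(X) generated by the sets {F : F ∩ K ≠ ∅} for K compact. -/
open Set MeasurableSpace

lemma zero_aux {X : Type*} [MetricSpace X]
    (mC : MeasurableSpace C(X, ℝ))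
    (hmC : mC = MeasurableSpace.generateFrom
      {s : Set C(X, ℝ) | ∃ (x : X) (B : Set ℝ), MeasurableSet B ∧ s = {f | f x ∈ B}})
    (K : Set X) (hK : IsCompact K) :
    @MeasurableSet _ mC {f : C(X, ℝ) | ∃ x ∈ K, f x = 0} := by
  obtain ⟨D, hDK, hDc, hKD⟩ := EMetric.subset_countable_closure_of_compact hK
  have hset : {f : C(X, ℝ) | ∃ x ∈ K, f x = 0}
      = ⋂ n : ℕ, ⋃ d ∈ D, {f : C(X, ℝ) | f d ∈ Set.Ioo (-(1/(n+1) : ℝ)) (1/(n+1))} := by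
    ext f
    simp only [mem_setOf_eq, mem_iInter, mem_iUnion, mem_Ioo]
    constructor
    · rintro ⟨x, hxK, hfx⟩ n
      have hε : (0:ℝ) < 1/(n+1) := by positivity
      have hopen : IsOpen {y : X | f y ∈ Set.Ioo (-(1/(n+1) : ℝ)) (1/(n+1))} :=
        isOpen_Ioo.preimage f.continuous
      have hxmem : x ∈ {y : X | f y ∈ Set.Ioo (-(1/(n+1) : ℝ)) (1/(n+1))} := by
        simp only [mem_setOf_eq, mem_Ioo, hfx]
        exact ⟨by linarith, hε⟩
      obtain ⟨d, hd1, hd2⟩ :=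
        _root_.mem_closure_iff.1 (hKD hxK) _ hopen hxmem
      exact ⟨d, hd2, hd1.1, hd1.2⟩
    · intro h
      set t : ℕ → Set X := fun n => K ∩ f ⁻¹' Set.Icc (-(1/(n+1) : ℝ)) (1/(n+1)) with ht
      have htcl : ∀ n, IsClosed (t n) := fun n =>
        hK.isClosed.inter (isClosed_Icc.preimage f.continuous)
      have htn : ∀ n, (t n).Nonempty := by
        intro n
        obtain ⟨d, hdD, h1, h2⟩ := h n
        exact ⟨d, hDK hdD, le_of_lt h1, le_of_lt h2⟩
      have htd : ∀ n, t (n+1) ⊆ t n := by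
        intro n x hx
        obtain ⟨hxK, hxI⟩ := hx
        rw [mem_preimage, mem_Icc, ← abs_le] at hxI
        refine ⟨hxK, ?_⟩
        rw [mem_preimage, mem_Icc, ← abs_le]
        refine hxI.trans ?_
        push_cast
        exact one_div_le_one_div_of_le (by positivity) (by linarith)
      have ht0 : IsCompact (t 0) := hK.inter_right (isClosed_Icc.preimage f.continuous)
      obtain ⟨x, hx⟩ := IsCompact.nonempty_iInter_of_sequence_nonempty_isCompact_isClosed
        t htd htn ht0 htcl
      simp only [mem_iInter] at hx
      refine ⟨x, (hx 0).1, ?_⟩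
      by_contra hne
      obtain ⟨n, hn⟩ := exists_nat_one_div_lt (abs_pos.mpr hne)
      have := (hx n).2
      rw [mem_preimage, mem_Icc, ← abs_le] at this
      linarith
  rw [hset, hmC]
  refine MeasurableSet.iInter fun n => MeasurableSet.biUnion hDc fun d _ =>
    measurableSet_generateFrom ⟨d, Set.Ioo _ _, measurableSet_Ioo, rfl⟩

theorem stmt_1 {X : Type*} [MetricSpace X] [CompactSpace X]
    (mC : MeasurableSpace C(X, ℝ))
    (hmC : mC = MeasurableSpace.generateFrom
      {s : Set C(X, ℝ) | ∃ (x : X) (B : Set ℝ), MeasurableSet B ∧ s = {f | f x ∈ B}})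
    (mF : MeasurableSpace {F : Set X // IsClosed F})
    (hmF : mF = MeasurableSpace.generateFrom
      {s : Set {F : Set X // IsClosed F} |
        ∃ K : Set X, IsCompact K ∧ s = {F | (F.1 ∩ K).Nonempty}}) :
    (∀ K : Set X, IsCompact K →
      @MeasurableSet _ mC {f : C(X, ℝ) | ∃ x ∈ K, f x = 0}) ∧
    @Measurable _ _ mC mF
      (fun f : C(X, ℝ) =>
        (⟨f ⁻¹' {0}, isClosed_singleton.preimage f.continuous⟩ :
          {F : Set X // IsClosed F})) := by
  refine ⟨fun K hK => zero_aux mC hmC K hK, ?_⟩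
  subst hmF
  refine measurable_generateFrom ?_
  rintro s ⟨K, hK, rfl⟩
  have : (fun f : C(X, ℝ) =>
        (⟨f ⁻¹' {0}, isClosed_singleton.preimage f.continuous⟩ :
          {F : Set X // IsClosed F})) ⁻¹' {F | (F.1 ∩ K).Nonempty}
      = {f : C(X, ℝ) | ∃ x ∈ K, f x = 0} := by
    ext f
    simp only [mem_preimage, mem_setOf_eq, Set.Nonempty, mem_inter_iff, mem_preimage,
      mem_singleton_iff]
    exact ⟨fun ⟨x, h1, h2⟩ => ⟨x, h2, h1⟩, fun ⟨x, h1, h2⟩ => ⟨x, h2, h1⟩⟩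
  rw [this]
  exact zero_aux mC hmC K hK
end

section
/- Let Y be a topological space and N a positive integer. Then Y has strictly fewer than N connected components if and only if for any N pairwise disjoint clopen subsets Y₁, …, Y_N of Y, at least one of them is empty. -/
open Set Function

theorem stmt_2 {Y : Type*} [TopologicalSpace Y] (N : ℕ) (hN : 0 < N) :
    Cardinal.mk (ConnectedComponents Y) < N ↔
      ∀ Ys : Fin N → Set Y, (∀ i, IsClopen (Ys i)) →
        Pairwise (Function.onFun Disjoint Ys) → ∃ i, Ys i = ∅ := by
  classical
  constructor
  · intro hcard Ys hclopen hdisj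
    by_contra h
    push_neg at h
    choose y hy using h
    have hinj : Function.Injective
        (fun i : ULift.{_, 0} (Fin N) => (ConnectedComponents.mk (y i.down))) := by
      intro i j hij
      by_contra hne
      have hne' : i.down ≠ j.down := by
        intro h; apply hne; cases i; cases j; simpa using h
      have h1 : connectedComponent (y i.down) = connectedComponent (y j.down) :=
        ConnectedComponents.coe_eq_coe.mp hij
      have h2 : y j.down ∈ Ys i.down := by
        have hsub := (hclopen i.down).connectedComponent_subset (hy i.down)
        exact hsub (h1 ▸ mem_connectedComponent)
      exact (Set.disjoint_left.mp (hdisj hne') h2) (hy j.down)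
    have hle : (N : Cardinal) ≤ Cardinal.mk (ConnectedComponents Y) := by
      simpa using Cardinal.mk_le_of_injective hinj
    exact absurd hcard (not_lt.mpr hle)
  · intro hRHS
    set P : ℕ → Prop := fun k => ∃ U : Fin k → Set Y, (∀ i, IsClopen (U i)) ∧
      Pairwise (Function.onFun Disjoint U) ∧ ∀ i, (U i).Nonempty with hPdef
    have hPlt : ∀ m, P m → m < N := by
      rintro m ⟨U, hc, hd, hne⟩
      by_contra hge
      push_neg at hge
      obtain ⟨i, hi⟩ := hRHS (fun i => U (Fin.castLE hge i))
        (fun i => hc _)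
        (fun i j hij => hd ((Fin.castLE_injective hge).ne hij))
      exact (hne _).ne_empty hi
    have hP0 : P 0 := ⟨fun i => i.elim0, fun i => i.elim0,
      fun i => i.elim0, fun i => i.elim0⟩
    set k : ℕ := Nat.findGreatest P N with hkdef
    have hPk : P k := Nat.findGreatest_spec (Nat.zero_le N) hP0
    have hklt : k < N := hPlt k hPk
    have hmax : ¬ P (k + 1) := Nat.findGreatest_is_greatest (Nat.lt_succ_self k) hklt
    obtain ⟨U, hc, hd, hne⟩ := hPk
    -- helper: extending the family by a disjoint nonempty clopen set is impossible
    have snocP : ∀ (V : Fin k → Set Y) (W : Set Y), (∀ i, IsClopen (V i)) → IsClopen W →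
        Pairwise (Function.onFun Disjoint V) → (∀ i, Disjoint (V i) W) →
        (∀ i, (V i).Nonempty) → W.Nonempty → False := by
      intro V W hVc hWc hVd hVW hVne hWne
      apply hmax
      refine ⟨Fin.snoc V W, ?_, ?_, ?_⟩
      · intro i
        refine Fin.lastCases ?_ ?_ i
        · simpa using hWc
        · intro j; simpa using hVc j
      · intro i j hij
        rcases Fin.eq_castSucc_or_eq_last i with ⟨i', rfl⟩ | rfl <;>
          rcases Fin.eq_castSucc_or_eq_last j with ⟨j', rfl⟩ | rfl
        · simp only [Function.onFun, Fin.snoc_castSucc]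
          exact hVd (fun h => hij (by rw [h]))
        · simp only [Function.onFun, Fin.snoc_last, Fin.snoc_castSucc]
          exact hVW i'
        · simp only [Function.onFun, Fin.snoc_last, Fin.snoc_castSucc]
          exact (hVW j').symm
        · exact absurd rfl hij
      · intro i
        refine Fin.lastCases ?_ ?_ i
        · simpa using hWne
        · intro j; simpa using hVne j
    -- the family covers Y
    have hcover : (⋃ i, U i) = Set.univ := by
      by_contra hcov
      have hW : ((⋃ i, U i)ᶜ).Nonempty := by
        rw [Set.nonempty_compl]
        exact fun h => hcov (by rw [h])
      refine snocP U (⋃ i, U i)ᶜ hc ?_ hd ?_ hne hW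
      · exact (isClopen_iUnion_of_finite hc).compl
      · intro i
        exact Set.disjoint_compl_right_iff_subset.mpr (Set.subset_iUnion U i)
    -- each piece is preconnected
    have hconn : ∀ i, IsPreconnected (U i) := by
      intro i
      by_contra hnc
      rw [IsPreconnected] at hnc
      push_neg at hnc
      obtain ⟨u, v, hu, hv, hsub, hnu, hnv, hiv⟩ := hnc
      have h1 : U i ∩ u = U i ∩ vᶜ := by
        ext x
        constructor
        · rintro ⟨hx, hxu⟩
          refine ⟨hx, fun hxv => ?_⟩
          have : x ∈ U i ∩ (u ∩ v) := ⟨hx, hxu, hxv⟩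
          simp [hiv] at this
        · rintro ⟨hx, hxv⟩
          exact ⟨hx, (hsub hx).resolve_right hxv⟩
      have h2 : U i ∩ v = U i ∩ uᶜ := by
        ext x
        constructor
        · rintro ⟨hx, hxv⟩
          refine ⟨hx, fun hxu => ?_⟩
          have : x ∈ U i ∩ (u ∩ v) := ⟨hx, hxu, hxv⟩
          simp [hiv] at this
        · rintro ⟨hx, hxu⟩
          exact ⟨hx, (hsub hx).resolve_left hxu⟩
      have hcu : IsClopen (U i ∩ u) :=
        ⟨h1 ▸ (hc i).isClosed.inter (hv.isClosed_compl), (hc i).isOpen.inter hu⟩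
      have hcv : IsClopen (U i ∩ v) :=
        ⟨h2 ▸ (hc i).isClosed.inter (hu.isClosed_compl), (hc i).isOpen.inter hv⟩
      have hupd : ∀ j, Function.update U i (U i ∩ u) j ⊆ U j := by
        intro j
        by_cases hji : j = i
        · subst hji; simp
        · simp [Function.update_of_ne hji]
      refine snocP (Function.update U i (U i ∩ u)) (U i ∩ v) ?_ hcv ?_ ?_ ?_ hnv
      · intro j
        by_cases hji : j = i
        · subst hji; simpa using hcu
        · simpa [Function.update_of_ne hji] using hc j
      · intro a b hab
        exact (hd hab).mono (hupd a) (hupd b)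
      · intro j
        by_cases hji : j = i
        · subst hji
          simp only [Function.update_self]
          rw [Set.disjoint_left]
          rintro x ⟨hx1, hx2⟩ ⟨hx3, hx4⟩
          have : x ∈ U j ∩ (u ∩ v) := ⟨hx1, hx2, hx4⟩
          simp [hiv] at this
        · exact (hd hji).mono_left (hupd j) |>.mono_right Set.inter_subset_left
      · intro j
        by_cases hji : j = i
        · subst hji; simpa using hnu
        · simpa [Function.update_of_ne hji] using hne j
    -- surjection from Fin k onto components
    choose x hx using hne
    have hsurj : Function.Surjective
        (fun i : ULift.{_, 0} (Fin k) => (ConnectedComponents.mk (x i.down))) := by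
      intro c
      obtain ⟨y, rfl⟩ := ConnectedComponents.surjective_coe c
      have : y ∈ ⋃ i, U i := hcover ▸ Set.mem_univ y
      obtain ⟨i, hi⟩ := Set.mem_iUnion.mp this
      refine ⟨⟨i⟩, ?_⟩
      have hsub : U i ⊆ connectedComponent (x i) :=
        (hconn i).subset_connectedComponent (hx i)
      exact ConnectedComponents.coe_eq_coe.mpr (connectedComponent_eq (hsub hi))
    calc Cardinal.mk (ConnectedComponents Y) ≤ Cardinal.mk (ULift.{_, 0} (Fin k)) :=
          Cardinal.mk_le_of_surjective hsurj
      _ = (k : Cardinal) := by simp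
      _ < (N : Cardinal) := by exact_mod_cast hklt
end

section
/- Let X be a compact metric space, let 𝒰 be a collection of open sets in X that separates closed sets (i.e., for any finite family of pairwise disjoint closed sets F₁,…,F_n there exist pairwise disjoint U₁,…,U_n ∈ 𝒰 with F_i ⊆ U_i), let F ⊆ X be closed, and let N be a positive integer. Then F has strictly fewer than N connected components if and only if for any pairwise disjoint U₁,…,U_N ∈ 𝒰 with F ⊆ ⋃ᵢ Uᵢ, some Uᵢ does not intersect F. -/
open Set

theorem stmt_4 {X : Type*} [MetricSpace X] [CompactSpace X]
    (𝒰 : Set (Set X)) (hopen : ∀ U ∈ 𝒰, IsOpen U)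
    (hsep : ∀ (n : ℕ) (F : Fin n → Set X), (∀ i, IsClosed (F i)) →
      Pairwise (Function.onFun Disjoint F) →
      ∃ U : Fin n → Set X, (∀ i, U i ∈ 𝒰) ∧ Pairwise (Function.onFun Disjoint U) ∧
        ∀ i, F i ⊆ U i)
    (F : Set X) (hF : IsClosed F) (N : ℕ) (hN : 0 < N) :
    Cardinal.mk (ConnectedComponents F) < N ↔
      ∀ U : Fin N → Set X, (∀ i, U i ∈ 𝒰) → Pairwise (Function.onFun Disjoint U) →
        F ⊆ ⋃ i, U i → ∃ i, F ∩ U i = ∅ := by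
  haveI : CompactSpace F := isCompact_iff_compactSpace.mp hF.isCompact
  constructor
  · intro hlt U hU hdisj hcover
    by_contra hcon
    push_neg at hcon
    choose x hx using hcon
    set f : Fin N → ConnectedComponents F :=
      fun i => ((⟨x i, (hx i).1⟩ : F) : ConnectedComponents F) with hf
    have hinj : Function.Injective f := by
      intro i j hij
      by_contra hne
      rw [hf, ConnectedComponents.coe_eq_coe] at hij
      set C := connectedComponent (⟨x i, (hx i).1⟩ : F) with hC
      have hpc : IsPreconnected C := isPreconnected_connectedComponent
      have hA : IsOpen ((Subtype.val : F → X) ⁻¹' U i) :=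
        (hopen _ (hU i)).preimage continuous_subtype_val
      have hB : IsOpen ((Subtype.val : F → X) ⁻¹' (⋃ k, ⋃ _ : k ≠ i, U k)) := by
        refine IsOpen.preimage continuous_subtype_val ?_
        exact isOpen_iUnion fun k => isOpen_iUnion fun _ => hopen _ (hU k)
      have hsub : C ⊆ (Subtype.val : F → X) ⁻¹' U i ∪
          (Subtype.val : F → X) ⁻¹' (⋃ k, ⋃ _ : k ≠ i, U k) := by
        intro c _
        have : (c : X) ∈ ⋃ k, U k := hcover c.2
        obtain ⟨k, hk⟩ := mem_iUnion.mp this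
        by_cases hki : k = i
        · exact Or.inl (by simpa [hki] using hk)
        · exact Or.inr (mem_preimage.mpr (mem_iUnion.mpr ⟨k, mem_iUnion.mpr ⟨hki, hk⟩⟩))
      have h1 : (C ∩ (Subtype.val : F → X) ⁻¹' U i).Nonempty :=
        ⟨⟨x i, (hx i).1⟩, mem_connectedComponent, (hx i).2⟩
      have h2 : (C ∩ (Subtype.val : F → X) ⁻¹' (⋃ k, ⋃ _ : k ≠ i, U k)).Nonempty := by
        refine ⟨⟨x j, (hx j).1⟩, ?_, ?_⟩
        · exact connectedComponent_eq_iff_mem.mp hij.symm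
        · exact mem_preimage.mpr (mem_iUnion.mpr ⟨j, mem_iUnion.mpr ⟨Ne.symm hne, (hx j).2⟩⟩)
      obtain ⟨c, _, hcA, hcB⟩ := hpc _ _ hA hB hsub h1 h2
      obtain ⟨k, hk⟩ := mem_iUnion.mp hcB
      obtain ⟨hki, hck⟩ := mem_iUnion.mp hk
      exact Set.disjoint_left.mp (hdisj (Ne.symm hki)) hcA hck
    have hinj' : Function.Injective (f ∘ ULift.down.{u_1} (α := Fin N)) :=
      hinj.comp (fun a b h => by cases a; cases b; simpa using h)
    have := Cardinal.mk_le_of_injective hinj'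
    simp only [Cardinal.mk_uLift, Cardinal.mk_fin, Cardinal.lift_natCast] at this
    exact absurd hlt (not_lt.mpr this)
  · intro hR
    by_contra hge
    rw [not_lt] at hge
    obtain ⟨m, rfl⟩ : ∃ m, N = m + 1 := ⟨N - 1, (Nat.succ_pred_eq_of_pos hN).symm⟩
    -- get an injection Fin N ↪ ConnectedComponents F
    have hcard : (Cardinal.mk (ULift.{_} (Fin (m + 1)))) ≤ Cardinal.mk (ConnectedComponents F) := by
      simpa using hge
    obtain ⟨e⟩ := Cardinal.le_def _ _ |>.mp hcard
    set g : Fin (m + 1) → ConnectedComponents F := fun i => e ⟨i⟩ with hg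
    have hginj : Function.Injective g := fun i j h => by
      simpa using congrArg ULift.down (e.injective h)
    choose y hy using fun i => ConnectedComponents.surjective_coe (g i)
    have hyne : ∀ i j : Fin (m + 1), i ≠ j → y j ∉ connectedComponent (y i) := by
      intro i j hij hmem
      exact hij (hginj (by rw [← hy i, ← hy j, ConnectedComponents.coe_eq_coe'.mpr hmem]))
    have hsepV : ∀ i j : Fin (m + 1), i ≠ j →
        ∃ s : Set F, IsClopen s ∧ y i ∈ s ∧ y j ∉ s := by
      intro i j hij
      have := hyne i j hij
      rw [connectedComponent_eq_iInter_isClopen] at this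
      rw [mem_iInter] at this
      push_neg at this
      obtain ⟨⟨s, hs, his⟩, hjs⟩ := this
      exact ⟨s, hs, his, hjs⟩
    classical
    set V : Fin (m + 1) → Fin (m + 1) → Set F := fun i j =>
      if h : i = j then univ else (hsepV i j h).choose with hV
    have hVclopen : ∀ i j, IsClopen (V i j) := by
      intro i j
      rw [hV]; dsimp only
      split
      · exact isClopen_univ
      · exact (hsepV i j ‹_›).choose_spec.1
    have hVii : ∀ i j, y i ∈ V i j := by
      intro i j
      rw [hV]; dsimp only
      split
      · trivial
      · exact (hsepV i j ‹_›).choose_spec.2.1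
    have hVij : ∀ i j, i ≠ j → y j ∉ V i j := by
      intro i j h
      rw [hV]; dsimp only
      rw [dif_neg h]
      exact (hsepV i j h).choose_spec.2.2
    set W : Fin (m + 1) → Set F := fun i => ⋂ j ∈ Finset.univ, V i j with hW
    have hWclopen : ∀ i, IsClopen (W i) :=
      fun i => isClopen_biInter_finset fun j _ => hVclopen i j
    have hyW : ∀ i, y i ∈ W i := fun i => mem_iInter₂.mpr fun j _ => hVii i j
    have hyWn : ∀ i j, j ≠ i → y j ∉ W i := by
      intro i j h hmem
      exact hVij i j (Ne.symm h) (mem_iInter₂.mp hmem j (Finset.mem_univ j))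
    set B : Fin (m + 1) → Set F := fun i => W i \ ⋃ j ∈ Finset.Iio i, W j with hB
    have hBclopen : ∀ i, IsClopen (B i) := by
      intro i
      exact (hWclopen i).diff (isClopen_biUnion_finset fun j _ => hWclopen j)
    have hBsub : ∀ i, B i ⊆ W i := fun i => diff_subset
    have hBdisj : ∀ i j : Fin (m + 1), i < j → Disjoint (B i) (B j) := by
      intro i j hij
      refine Set.disjoint_left.mpr fun a hai haj => ?_
      exact haj.2 (mem_iUnion₂.mpr ⟨i, Finset.mem_Iio.mpr hij, hBsub i hai⟩)
    have hyB : ∀ i, y i ∈ B i := by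
      intro i
      refine ⟨hyW i, fun hmem => ?_⟩
      obtain ⟨j, hj, hjm⟩ := mem_iUnion₂.mp hmem
      exact hyWn j i (Finset.mem_Iio.mp hj).ne' hjm
    set A : Fin (m + 1) → Set F := fun i =>
      if i = Fin.last m then (⋃ j, ⋃ _ : j ≠ Fin.last m, B j)ᶜ else B i with hA
    have hAclopen : ∀ i, IsClopen (A i) := by
      intro i
      rw [hA]; dsimp only
      split
      · refine IsClopen.compl ?_
        have : (⋃ j, ⋃ _ : j ≠ Fin.last m, B j) =
            ⋃ j ∈ Finset.univ.filter (· ≠ Fin.last m), B j := by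
          ext a; simp
        rw [this]
        exact isClopen_biUnion_finset fun j _ => hBclopen j
      · exact hBclopen i
    have hyA : ∀ i, y i ∈ A i := by
      intro i
      rw [hA]; dsimp only
      split
      · rename_i h
        intro hmem
        obtain ⟨j, hj⟩ := mem_iUnion.mp hmem
        obtain ⟨hjne, hjm⟩ := mem_iUnion.mp hj
        exact hyWn j i (fun hij => hjne (hij ▸ h)) (hBsub j hjm)
      · exact hyB i
    have hAdisj : Pairwise (Function.onFun Disjoint A) := by
      have key : ∀ j, j ≠ Fin.last m →
          Disjoint ((⋃ k, ⋃ _ : k ≠ Fin.last m, B k)ᶜ) (B j) := by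
        intro j hj
        refine Set.disjoint_left.mpr fun a ha haj => ?_
        exact ha (mem_iUnion.mpr ⟨j, mem_iUnion.mpr ⟨hj, haj⟩⟩)
      intro i j hij
      unfold Function.onFun
      rw [hA]; dsimp only
      by_cases hi : i = Fin.last m
      · have hj : j ≠ Fin.last m := fun h => hij (hi.trans h.symm)
        rw [if_pos hi, if_neg hj]
        exact key j hj
      · by_cases hj : j = Fin.last m
        · rw [if_neg hi, if_pos hj]
          exact (key i hi).symm
        · rw [if_neg hi, if_neg hj]
          rcases lt_or_gt_of_ne hij with h | h
          · exact hBdisj i j h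
          · exact (hBdisj j i h).symm
    have hAcover : ∀ a : F, ∃ i, a ∈ A i := by
      intro a
      by_cases h : ∃ j, j ≠ Fin.last m ∧ a ∈ B j
      · obtain ⟨j, hj, hjm⟩ := h
        exact ⟨j, by rw [hA]; dsimp only; rw [if_neg hj]; exact hjm⟩
      · push_neg at h
        refine ⟨Fin.last m, ?_⟩
        rw [hA]; dsimp only; rw [if_pos rfl]
        intro hmem
        obtain ⟨j, hj⟩ := mem_iUnion.mp hmem
        obtain ⟨hjne, hjm⟩ := mem_iUnion.mp hj
        exact h j hjne hjm
    -- transfer to X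
    set G : Fin (m + 1) → Set X := fun i => Subtype.val '' A i with hG
    have hGclosed : ∀ i, IsClosed (G i) := by
      intro i
      exact (((hAclopen i).isClosed.isCompact).image continuous_subtype_val).isClosed
    have hGdisj : Pairwise (Function.onFun Disjoint G) := by
      intro i j hij
      exact (Set.disjoint_image_iff Subtype.val_injective).mpr (hAdisj hij)
    obtain ⟨U, hU𝒰, hUdisj, hGU⟩ := hsep (m + 1) G hGclosed hGdisj
    have hcover : F ⊆ ⋃ i, U i := by
      intro z hz
      obtain ⟨i, hi⟩ := hAcover ⟨z, hz⟩
      exact mem_iUnion.mpr ⟨i, hGU i ⟨⟨z, hz⟩, hi, rfl⟩⟩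
    obtain ⟨i, hi⟩ := hR U hU𝒰 hUdisj hcover
    have : (y i : X) ∈ F ∩ U i := ⟨(y i).2, hGU i ⟨y i, hyA i, rfl⟩⟩
    rw [hi] at this
    exact this
end

section
/- Let X be a compact metric space. The map Count : F(X) → ℕ ∪ {0, ∞} assigning to each closed subset its number of connected components is measurable with respect to the σ-algebra on F(X) generated by the sets {F : F ∩ U ≠ ∅} for U open. -/
open Set Metric

universe u
section enat
variable {α β : Type u}

lemma myENat.card_le_of_injective (f : α → β) (hf : Function.Injective f) :
    ENat.card α ≤ ENat.card β :=
  Cardinal.enat_gc.monotone_u (Cardinal.mk_le_of_injective hf)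

lemma myENat.card_le_of_surjective (f : α → β) (hf : Function.Surjective f) :
    ENat.card β ≤ ENat.card α :=
  Cardinal.enat_gc.monotone_u (Cardinal.mk_le_of_surjective hf)

lemma myENat.natCast_le_card_iff {n : ℕ} :
    (n : ℕ∞) ≤ ENat.card α ↔ Nonempty (Fin n ↪ α) := by
  rw [ENat.card, ← Cardinal.enat_gc _ _, Cardinal.ofENat_nat]
  rw [show ((n : ℕ) : Cardinal.{u}) = Cardinal.lift.{u} (Cardinal.mk (Fin n)) by simp]
  rw [show (Cardinal.mk α) = Cardinal.lift.{0} (Cardinal.mk α) by simp]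
  exact Cardinal.lift_mk_le'

lemma myENat.le_of_forall {a b : ℕ∞} (h : ∀ n : ℕ, (n : ℕ∞) ≤ a → (n : ℕ∞) ≤ b) : a ≤ b := by
  cases a with
  | top =>
    have h' : ∀ n : ℕ, (n : ℕ∞) ≤ b := fun n => h n le_top
    rcases b with _ | m
    · exact le_top
    · exact absurd (ENat.coe_le_coe.mp (h' (m + 1))) (Nat.not_succ_le_self m)
  | coe n => exact h n le_rfl

end enat

section chain
variable {X : Type u} [MetricSpace X]

def chainRel (ε : ℝ) (S : Set X) : S → S → Prop := fun a b => dist (a : X) (b : X) < ε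

def chainQuot (ε : ℝ) (S : Set X) : Type u := Quot (chainRel ε S)

noncomputable def chainCard (ε : ℝ) (S : Set X) : ℕ∞ := ENat.card (chainQuot ε S)

lemma chainCard_le_of_map {S S' : Set X} {ε ε' : ℝ} (f : S' → S)
    (hstep : ∀ a b : S', dist (a : X) (b : X) < ε' → dist (f a : X) (f b : X) < ε)
    (hsurj : ∀ s : S, ∃ a : S', dist (f a : X) (s : X) < ε) :
    chainCard ε S ≤ chainCard ε' S' := by
  apply myENat.card_le_of_surjective (Quot.map f (fun a b h => hstep a b h))
  intro q
  induction q using Quot.ind with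
  | _ s =>
    obtain ⟨a, ha⟩ := hsurj s
    exact ⟨Quot.mk _ a, Quot.sound ha⟩

lemma chainCard_mono {S : Set X} {ε ε' : ℝ} (h : ε ≤ ε') (hε : 0 < ε) :
    chainCard ε' S ≤ chainCard ε S :=
  chainCard_le_of_map id (fun a b hab => lt_of_lt_of_le hab h)
    (fun s => ⟨s, by simpa using lt_of_lt_of_le hε h⟩)

lemma quotmk_eq_of_connectedComponent_eq {F : Set X} {ε : ℝ} (hε : 0 < ε)
    {x y : F} (h : connectedComponent x = connectedComponent y) :
    Quot.mk (chainRel ε F) x = Quot.mk (chainRel ε F) y := by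
  set C : Set F := {z | Quot.mk (chainRel ε F) x = Quot.mk (chainRel ε F) z} with hC
  have hball : ∀ z w : F, dist z w < ε → Quot.mk (chainRel ε F) z = Quot.mk (chainRel ε F) w :=
    fun z w hzw => Quot.sound (by rwa [Subtype.dist_eq] at hzw)
  have hopen : IsOpen C := by
    rw [Metric.isOpen_iff]
    intro z hz
    exact ⟨ε, hε, fun w hw => hz.trans (hball z w (by rw [mem_ball] at hw; rwa [dist_comm] at hw))⟩
  have hopen' : IsOpen Cᶜ := by
    rw [Metric.isOpen_iff]
    intro z hz
    refine ⟨ε, hε, fun w hw hwC => hz ?_⟩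
    exact hwC.trans (hball w z (mem_ball.mp hw))
  have hclopen : IsClopen C := ⟨isOpen_compl_iff.mp hopen', hopen⟩
  have hxC : x ∈ C := rfl
  have hsub : connectedComponent x ⊆ C := hclopen.connectedComponent_subset hxC
  exact hsub (h ▸ mem_connectedComponent)

lemma chainCard_le_card_components {F : Set X} {ε : ℝ} (hε : 0 < ε) :
    chainCard ε F ≤ ENat.card (ConnectedComponents F) := by
  refine myENat.card_le_of_surjective
    (Quotient.lift (Quot.mk (chainRel ε F))
      (fun a b hab => quotmk_eq_of_connectedComponent_eq hε hab)) ?_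
  intro q
  induction q using Quot.ind with
  | _ s => exact ⟨ConnectedComponents.mk s, rfl⟩

end chain

section eps
variable {X : Type u} [MetricSpace X]

lemma exists_chainCard_ge {F : Set X} (hF : IsClosed F) [CompactSpace X] {n : ℕ}
    (hn : (n : ℕ∞) ≤ ENat.card (ConnectedComponents F)) :
    ∃ ε > 0, (n : ℕ∞) ≤ chainCard ε F := by
  rcases Nat.eq_zero_or_pos n with rfl | hn0
  · exact ⟨1, one_pos, by simp⟩
  obtain ⟨ι⟩ := myENat.natCast_le_card_iff.mp hn
  choose x hx using fun i => ConnectedComponents.surjective_coe (α := F) (ι i)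
  haveI : CompactSpace F := isCompact_iff_compactSpace.mp hF.isCompact
  have sep : ∀ i j : Fin n, ∃ (C : Set F) (ε : ℝ), 0 < ε ∧
      (i ≠ j → x i ∈ C ∧ x j ∉ C ∧
        ∀ a b : F, a ∈ C → dist (a : X) (b : X) < ε → b ∈ C) := by
    intro i j
    by_cases hij : i = j
    · exact ⟨Set.univ, 1, one_pos, fun h => absurd hij h⟩
    have hcomp : connectedComponent (x i) ≠ connectedComponent (x j) := by
      intro h
      apply hij
      apply ι.injective
      rw [← hx i, ← hx j]
      exact ConnectedComponents.coe_eq_coe.mpr h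
    have hxj : x j ∉ connectedComponent (x i) := by
      intro hmem
      exact hcomp (connectedComponent_eq hmem)
    rw [connectedComponent_eq_iInter_isClopen (x i)] at hxj
    simp only [Set.mem_iInter, not_forall] at hxj
    obtain ⟨⟨C, hCclopen, hxiC⟩, hxjC⟩ := hxj
    obtain ⟨δ, hδ, hth⟩ := IsCompact.exists_thickening_subset_open
      (hCclopen.1.isCompact) hCclopen.2 (subset_refl C)
    refine ⟨C, δ, hδ, fun _ => ⟨hxiC, hxjC, fun a b ha hab => ?_⟩⟩
    apply hth
    rw [Metric.mem_thickening_iff]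
    exact ⟨a, ha, by rw [Subtype.dist_eq, dist_comm]; exact hab⟩
  choose C eps epspos hsep using sep
  haveI : Nonempty (Fin n × Fin n) := ⟨(⟨0, hn0⟩, ⟨0, hn0⟩)⟩
  set ε : ℝ := (Finset.univ : Finset (Fin n × Fin n)).inf' Finset.univ_nonempty
    (fun p => eps p.1 p.2) with hεdef
  have hε : 0 < ε := by
    rw [hεdef, Finset.lt_inf'_iff]
    exact fun p _ => epspos p.1 p.2
  have hεle : ∀ i j : Fin n, ε ≤ eps i j := fun i j =>
    Finset.inf'_le _ (Finset.mem_univ (i, j))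
  refine ⟨ε, hε, myENat.natCast_le_card_iff.mpr ⟨⟨fun i => Quot.mk (chainRel ε F) (x i), ?_⟩⟩⟩
  intro i j hij
  by_contra hne
  obtain ⟨hxiC, hxjC, hinv⟩ := hsep i j hne
  have hresp : ∀ a b : F, chainRel ε F a b → (a ∈ C i j) = (b ∈ C i j) := by
    intro a b hab
    have hab' : dist (a : X) (b : X) < eps i j := lt_of_lt_of_le hab (hεle i j)
    have hba' : dist (b : X) (a : X) < eps i j := by rwa [dist_comm] at hab'
    exact propext ⟨fun ha => hinv a b ha hab', fun hb => hinv b a hb hba'⟩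
  have := congrArg (Quot.lift (fun z => z ∈ C i j) hresp) hij
  simp only [Quot.lift_mk] at this
  rw [this] at hxiC
  exact hxjC hxiC

end eps

section net
variable {X : Type u} [MetricSpace X]

def hitSet (P : Set X) (δ : ℝ) (F : Set X) : Set X :=
  {p ∈ P | (F ∩ ball p (2 * δ)).Nonempty}

variable {P : Set X} {δ : ℝ} {F : Set X}

lemma hit_bound_upper (hδ : 0 < δ) (hnet : ∀ x : X, ∃ p ∈ P, dist x p < δ) :
    chainCard (6 * δ) (hitSet P δ F) ≤ chainCard (4 * δ) F := by
  have hf : ∀ x : F, ∃ p : hitSet P δ F, dist (x : X) (p : X) < δ := by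
    intro x
    obtain ⟨p, hp, hd⟩ := hnet x
    exact ⟨⟨p, hp, ⟨x, x.2, mem_ball.mpr (hd.trans_le (by linarith))⟩⟩, hd⟩
  choose f hfd using hf
  refine chainCard_le_of_map f (fun a b hab => ?_) (fun s => ?_)
  · have h1 := hfd a
    have h2 := hfd b
    have := dist_triangle4 (f a : X) (a : X) (b : X) (f b : X)
    have hcomm : dist (f a : X) (a : X) = dist (a : X) (f a : X) := dist_comm _ _
    linarith
  · obtain ⟨hp, x, hxF, hxball⟩ := s.2
    rw [mem_ball] at hxball
    refine ⟨⟨x, hxF⟩, ?_⟩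
    have h1 : dist x (f ⟨x, hxF⟩ : X) < δ := hfd ⟨x, hxF⟩
    have hcomm : dist (f ⟨x, hxF⟩ : X) x = dist x (f ⟨x, hxF⟩ : X) := dist_comm _ _
    have := dist_triangle (f ⟨x, hxF⟩ : X) x (s : X)
    linarith

lemma hit_bound_lower (hδ : 0 < δ) (hnet : ∀ x : X, ∃ p ∈ P, dist x p < δ) :
    chainCard (10 * δ) F ≤ chainCard (6 * δ) (hitSet P δ F) := by
  have hf : ∀ p : hitSet P δ F, ∃ x : F, dist (x : X) (p : X) < 2 * δ := by
    intro p
    obtain ⟨x, hxF, hxball⟩ := p.2.2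
    exact ⟨⟨x, hxF⟩, mem_ball.mp hxball⟩
  choose f hfd using hf
  refine chainCard_le_of_map f (fun a b hab => ?_) (fun s => ?_)
  · have h1 := hfd a
    have h2 := hfd b
    have := dist_triangle4 (f a : X) (a : X) (b : X) (f b : X)
    have hcomm : dist (b : X) (f b : X) = dist (f b : X) (b : X) := dist_comm _ _
    linarith
  · obtain ⟨p, hp, hd⟩ := hnet (s : X)
    have hpmem : p ∈ hitSet P δ F :=
      ⟨hp, ⟨s, s.2, mem_ball.mpr (hd.trans_le (by linarith))⟩⟩
    refine ⟨⟨p, hpmem⟩, ?_⟩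
    have h1 := hfd ⟨p, hpmem⟩
    have := dist_triangle (f ⟨p, hpmem⟩ : X) p (s : X)
    have hcomm : dist p (s : X) = dist (s : X) p := dist_comm _ _
    linarith

end net

theorem stmt_6 {X : Type*} [MetricSpace X] [CompactSpace X] :
    @Measurable {F : Set X // IsClosed F} ℕ∞
      (MeasurableSpace.generateFrom
        {s : Set {F : Set X // IsClosed F} |
          ∃ U : Set X, IsOpen U ∧ s = {F | (F.1 ∩ U).Nonempty}})
      ⊤
      (fun F => ENat.card (ConnectedComponents F.1)) := by
  classical
  set 𝓜 : MeasurableSpace {F : Set X // IsClosed F} := MeasurableSpace.generateFrom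
      {s : Set {F : Set X // IsClosed F} |
        ∃ U : Set X, IsOpen U ∧ s = {F | (F.1 ∩ U).Nonempty}} with h𝓜
  have hδpos : ∀ k : ℕ, (0:ℝ) < 1/(k+1) := fun k => by positivity
  have hnets : ∀ k : ℕ, ∃ t : Set X, t.Finite ∧ ∀ x : X, ∃ p ∈ t, dist x p < 1/(k+1) := by
    intro k
    obtain ⟨t, _, tfin, tcov⟩ := finite_cover_balls_of_compact (s := (Set.univ : Set X)) isCompact_univ (hδpos k)
    refine ⟨t, tfin, fun x => ?_⟩
    have := tcov (Set.mem_univ x)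
    simp only [Set.mem_iUnion, mem_ball, exists_prop] at this
    exact this
  choose P Pfin Pcov using hnets
  set g : ℕ → {F : Set X // IsClosed F} → ℕ∞ :=
    fun k F => chainCard (6 * (1/(k+1))) (hitSet (P k) (1/(k+1)) F.1) with hg
  have hpoint : ∀ F : {F : Set X // IsClosed F},
      ENat.card (ConnectedComponents F.1) = ⨆ k, g k F := by
    intro F
    apply le_antisymm
    · apply myENat.le_of_forall
      intro n hn
      obtain ⟨ε, hε, hch⟩ := exists_chainCard_ge F.2 hn
      obtain ⟨k, hk⟩ := exists_nat_ge (10/ε)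
      have hk1 : (0:ℝ) < (k:ℝ)+1 := by positivity
      have h1 : (10:ℝ)/ε ≤ (k:ℝ)+1 := le_trans hk (by linarith)
      have h2 : (10:ℝ) ≤ ((k:ℝ)+1) * ε := (div_le_iff₀ hε).mp h1
      have h10 : 10 * (1/((k:ℝ)+1)) ≤ ε := by
        rw [mul_one_div, div_le_iff₀ hk1, mul_comm]
        exact h2
      have hb1 : chainCard ε (F.1) ≤ chainCard (10 * (1/((k:ℝ)+1))) (F.1) :=
        chainCard_mono h10 (by positivity)
      have hb2 : chainCard (10 * (1/((k:ℝ)+1))) (F.1) ≤ g k F :=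
        hit_bound_lower (hδpos k) (Pcov k)
      exact le_trans (le_trans hch (le_trans hb1 hb2)) (le_iSup (fun k => g k F) k)
    · apply iSup_le
      intro k
      refine le_trans (hit_bound_upper (hδpos k) (Pcov k)) ?_
      exact chainCard_le_card_components (by positivity)
  have heq : (fun F : {F : Set X // IsClosed F} => ENat.card (ConnectedComponents F.1)) =
      fun F => ⨆ k, g k F := funext hpoint
  rw [heq]
  have hgen : ∀ U : Set X, IsOpen U →
      @MeasurableSet _ 𝓜 {F : {F : Set X // IsClosed F} | (F.1 ∩ U).Nonempty} :=
    fun U hU => MeasurableSpace.measurableSet_generateFrom ⟨U, hU, rfl⟩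
  have hgk : ∀ k, @Measurable _ ℕ∞ 𝓜 ⊤ (g k) := by
    intro k A _
    have hsub : g k ⁻¹' A = ⋃ T ∈ {T : Set X | T ⊆ P k ∧ chainCard (6*(1/(k+1))) T ∈ A},
        {F : {F : Set X // IsClosed F} | hitSet (P k) (1/(k+1)) F.1 = T} := by
      ext F
      simp only [Set.mem_preimage, Set.mem_iUnion, Set.mem_setOf_eq, exists_prop]
      constructor
      · intro hA
        exact ⟨hitSet (P k) (1/(k+1)) F.1, ⟨fun p hp => hp.1, hA⟩, rfl⟩
      · rintro ⟨T, ⟨hT, hTA⟩, hFT⟩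
        rw [hg]
        simp only [← hFT] at hTA
        exact hTA
    rw [hsub]
    have hfin : {T : Set X | T ⊆ P k ∧ chainCard (6*(1/(k+1))) T ∈ A}.Finite :=
      ((Pfin k).finite_subsets).subset (fun T hT => hT.1)
    apply MeasurableSet.biUnion hfin.countable
    intro T hT
    have hTP : T ⊆ P k := hT.1
    have hrw : {F : {F : Set X // IsClosed F} | hitSet (P k) (1/(k+1)) F.1 = T} =
        ⋂ p ∈ P k, {F : {F : Set X // IsClosed F} |
          p ∈ T ↔ (F.1 ∩ ball p (2*(1/(k+1)))).Nonempty} := by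
      ext F
      simp only [Set.mem_iInter, Set.mem_setOf_eq]
      constructor
      · rintro rfl p hp
        exact ⟨fun h => h.2, fun h => ⟨hp, h⟩⟩
      · intro h
        ext q
        constructor
        · rintro ⟨hqP, hqhit⟩
          exact (h q hqP).mpr hqhit
        · intro hqT
          exact ⟨hTP hqT, (h q (hTP hqT)).mp hqT⟩
    rw [hrw]
    apply MeasurableSet.biInter (Pfin k).countable
    intro p hp
    by_cases hpT : p ∈ T
    · have : {F : {F : Set X // IsClosed F} |
          p ∈ T ↔ (F.1 ∩ ball p (2*(1/(k+1)))).Nonempty} =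
          {F : {F : Set X // IsClosed F} | (F.1 ∩ ball p (2*(1/(k+1)))).Nonempty} := by
        ext F; simp [hpT]
      rw [this]
      exact hgen _ isOpen_ball
    · have : {F : {F : Set X // IsClosed F} |
          p ∈ T ↔ (F.1 ∩ ball p (2*(1/(k+1)))).Nonempty} =
          {F : {F : Set X // IsClosed F} | (F.1 ∩ ball p (2*(1/(k+1)))).Nonempty}ᶜ := by
        ext F; simp [hpT]
      rw [this]
      exact (hgen _ isOpen_ball).compl
  apply @measurable_to_countable' ℕ∞ {F : Set X // IsClosed F} ⊤ _ 𝓜 _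
  intro y
  have hset : (fun F : {F : Set X // IsClosed F} => ⨆ k, g k F) ⁻¹' {y} =
      (⋂ k, {F : {F : Set X // IsClosed F} | g k F ≤ y}) ∩
      ⋂ z ∈ {z : ℕ∞ | z < y}, ⋃ k, {F : {F : Set X // IsClosed F} | z < g k F} := by
    ext F
    simp only [Set.mem_preimage, Set.mem_singleton_iff, Set.mem_inter_iff, Set.mem_iInter,
      Set.mem_iUnion, Set.mem_setOf_eq]
    constructor
    · intro h
      refine ⟨fun k => h ▸ le_iSup (fun k => g k F) k, fun z hz => ?_⟩
      rw [← h] at hz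
      exact lt_iSup_iff.mp hz
    · rintro ⟨h1, h2⟩
      refine le_antisymm (iSup_le h1) ?_
      by_contra hlt
      rw [not_le] at hlt
      obtain ⟨k, hk⟩ := h2 _ hlt
      exact absurd (le_iSup (fun k => g k F) k) (not_le.mpr hk)
  rw [hset]
  apply MeasurableSet.inter
  · exact MeasurableSet.iInter (fun k => hgk k (show @MeasurableSet ℕ∞ ⊤ (Set.Iic y) from MeasurableSpace.measurableSet_top))
  · refine MeasurableSet.biInter (Set.to_countable _) (fun z _ => ?_)
    exact MeasurableSet.iUnion (fun k => hgk k (show @MeasurableSet ℕ∞ ⊤ (Set.Ioi z) from MeasurableSpace.measurableSet_top))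
end

section
/- Let C_D, S_D be the homogeneous degree-D polynomials with C_D(cos θ, sin θ) = cos(Dθ), S_D(cos θ, sin θ) = sin(Dθ). Then det [[∂C_D/∂c, ∂C_D/∂s], [c, s]] = D · S_D(c, s) as an identity of polynomials in c and s. -/
/-!
Differentiating `C (cos θ, sin θ) = cos (D θ)` in `θ` gives, by the chain rule,
`(s ∂C/∂c - c ∂C/∂s) (cos θ, sin θ) = D sin (D θ) = D S (cos θ, sin θ)`.
Both sides are homogeneous of degree `D`, and two homogeneous polynomials of the same degree
that agree on the unit circle agree on the whole plane, hence are equal over the infinite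
field `ℝ`.
-/

open MvPolynomial Real

namespace MvPolynomial

theorem IsHomogeneous.eval_smul {σ R : Type*} [CommSemiring R] {p : MvPolynomial σ R} {n : ℕ}
    (hp : p.IsHomogeneous n) (r : R) (x : σ → R) : eval (r • x) p = r ^ n * eval x p := by
  rw [eval_eq, eval_eq, Finset.mul_sum]
  refine Finset.sum_congr rfl fun d hd => ?_
  simp only [Pi.smul_apply, smul_eq_mul, mul_pow, Finset.prod_mul_distrib,
    Finset.prod_pow_eq_pow_sum, ← hp.degree_eq_sum_deg_support hd]
  ring

theorem IsHomogeneous.pderiv_mul_X_sub {σ R : Type*} [CommRing R] {p : MvPolynomial σ R}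
    {n : ℕ} (hp : p.IsHomogeneous n) (i j : σ) :
    (pderiv i p * X j - pderiv j p * X i).IsHomogeneous n := by
  cases n with
  | zero =>
    rw [totalDegree_eq_zero_iff_eq_C.mp ((totalDegree_zero_iff_isHomogeneous _).mpr hp)]
    simpa using isHomogeneous_zero σ R 0
  | succ n => exact (hp.pderiv.mul (isHomogeneous_X R j)).sub (hp.pderiv.mul (isHomogeneous_X R i))

theorem hasDerivAt_eval_comp {𝕜 σ : Type*} [NontriviallyNormedField 𝕜] [Fintype σ]
    (p : MvPolynomial σ 𝕜) {γ : 𝕜 → σ → 𝕜} {γ' : σ → 𝕜} {t : 𝕜}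
    (hγ : ∀ i, HasDerivAt (fun s => γ s i) (γ' i) t) :
    HasDerivAt (fun s => eval (γ s) p) (∑ i, eval (γ t) (pderiv i p) * γ' i) t := by
  induction p using MvPolynomial.induction_on with
  | C a => simpa using hasDerivAt_const t a
  | add p q hp hq => simpa [add_mul, Finset.sum_add_distrib] using hp.fun_add hq
  | mul_X p i hp =>
    classical
    simp only [map_mul, eval_X]
    refine (hp.fun_mul (hγ i)).congr_deriv ?_
    simp only [pderiv_mul, pderiv_X, map_add, map_mul, eval_X, add_mul, Finset.sum_add_distrib,
      Finset.sum_mul]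
    simp [Pi.single_apply, mul_right_comm]

theorem hasDerivAt_eval_cos_sin (p : MvPolynomial (Fin 2) ℝ) (θ : ℝ) :
    HasDerivAt (fun t => eval ![cos t, sin t] p)
      (-eval ![cos θ, sin θ] (pderiv 0 p * X 1 - pderiv 1 p * X 0)) θ := by
  have hγ : ∀ i, HasDerivAt (fun t => ![cos t, sin t] i) (![-sin θ, cos θ] i) θ := by
    intro i
    fin_cases i
    · simpa using hasDerivAt_cos θ
    · simpa using hasDerivAt_sin θ
  refine (hasDerivAt_eval_comp p hγ).congr_deriv ?_
  simp [Fin.sum_univ_two]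
  ring

/-- Every `x` is `r • (cos θ, sin θ)` with `(r, θ)` the polar coordinates of `x 0 + i x 1`. -/
theorem IsHomogeneous.eq_of_eval_cos_sin {n : ℕ} {p q : MvPolynomial (Fin 2) ℝ}
    (hp : p.IsHomogeneous n) (hq : q.IsHomogeneous n)
    (h : ∀ θ : ℝ, eval ![cos θ, sin θ] p = eval ![cos θ, sin θ] q) : p = q := by
  refine hp.funext hq fun x => ?_
  set z : ℂ := ⟨x 0, x 1⟩
  have hx : x = ‖z‖ • ![cos z.arg, sin z.arg] := by
    ext i
    fin_cases i
    · simp [z, Complex.norm_mul_cos_arg]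
    · simp [z, Complex.norm_mul_sin_arg]
  rw [hx, hp.eval_smul, hq.eval_smul, h]

end MvPolynomial

theorem stmt_14_general (D : ℕ) (C S : MvPolynomial (Fin 2) ℝ)
    (hC : C.IsHomogeneous D) (hS : S.IsHomogeneous D)
    (hCe : ∀ θ : ℝ, MvPolynomial.eval ![Real.cos θ, Real.sin θ] C = Real.cos (D * θ))
    (hSe : ∀ θ : ℝ, MvPolynomial.eval ![Real.cos θ, Real.sin θ] S = Real.sin (D * θ)) :
    MvPolynomial.pderiv 0 C * MvPolynomial.X 1 -
        MvPolynomial.pderiv 1 C * MvPolynomial.X 0 =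
      (D : MvPolynomial (Fin 2) ℝ) * S := by
  have hDS : ((D : MvPolynomial (Fin 2) ℝ) * S).IsHomogeneous D := by
    rw [← C_eq_coe_nat]
    exact hS.C_mul _
  refine (hC.pderiv_mul_X_sub 0 1).eq_of_eval_cos_sin hDS fun θ => ?_
  have hcos : HasDerivAt (fun t => eval ![cos t, sin t] C) (-(D * sin (D * θ))) θ := by
    simp only [hCe]
    simpa [mul_comm] using ((hasDerivAt_id θ).const_mul (D : ℝ)).cos
  have hangular := (hasDerivAt_eval_cos_sin C θ).unique hcos
  simp only [map_mul, map_natCast, hSe]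
  linarith

theorem stmt_14 (D : ℕ) (hD : 1 ≤ D) (C S : MvPolynomial (Fin 2) ℝ)
    (hC : C.IsHomogeneous D) (hS : S.IsHomogeneous D)
    (hCe : ∀ θ : ℝ, MvPolynomial.eval ![Real.cos θ, Real.sin θ] C = Real.cos (D * θ))
    (hSe : ∀ θ : ℝ, MvPolynomial.eval ![Real.cos θ, Real.sin θ] S = Real.sin (D * θ)) :
    MvPolynomial.pderiv 0 C * MvPolynomial.X 1 -
        MvPolynomial.pderiv 1 C * MvPolynomial.X 0 =
      (D : MvPolynomial (Fin 2) ℝ) * S :=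
  stmt_14_general D C S hC hS hCe hSe
end
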